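/- Let n, d be positive integers, let ε̃ ≥ 0 be a real number, and let M, W ∈ ℝ^{n×d} satisfy ‖W − M‖ ≤ ε̃, where ‖·‖ is the ℓ²-operator norm. Set k = ‖M‖_F² and B = (2·√(d·k) + d·ε̃)·ε̃, and assume B < k. Then ‖W‖_F² ≥ k − B > 0, and Σ_{j=1}^{d} | ‖M e_j‖²/k − ‖W e_j‖²/‖W‖_F² | ≤ 2B/(k − B), where e_1, …, e_d is the standard basis of ℝ^d and ‖·‖_F is the Frobenius norm. -/

import Mathlib

open Matrix

/-- The ℓ²-operator norm of a real matrix. -/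
noncomputable def l2OpNorm {m n : ℕ} (M : Matrix (Fin m) (Fin n) ℝ) : ℝ :=
  ‖LinearMap.toContinuousLinearMap (Matrix.toEuclideanLin M)‖

/-!
The column `M e_j` is the image of a unit vector, so each column norm moves by at most
`‖W - M‖ ≤ ε̃`, and each squared column norm by at most `ε̃ (2 ‖M e_j‖ + ε̃)`. Summing, with
Cauchy–Schwarz `∑ⱼ ‖M e_j‖ ≤ √(d k)`, the squared column norms move by at most `B` in ℓ¹; in
particular `|‖W‖_F² - k| ≤ B`. Normalising two nonnegative vectors at ℓ¹ distance `T` moves them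
by at most `2 T / k` in ℓ¹, where `k` is the mass of the first one.
-/

theorem norm_toLp_col {m n : ℕ} (A : Matrix (Fin m) (Fin n) ℝ) (j : Fin n) :
    ‖WithLp.toLp 2 (fun i => A i j)‖ = √(∑ i, A i j ^ 2) := by
  simp [EuclideanSpace.norm_eq]

theorem toEuclideanLin_single_one {m n : ℕ} (A : Matrix (Fin m) (Fin n) ℝ) (j : Fin n) :
    toEuclideanLin A (EuclideanSpace.single j 1) = WithLp.toLp 2 (fun i => A i j) := by
  ext i
  simp [toLpLin_apply, mulVec_single]

theorem norm_toLp_col_le_l2OpNorm {m n : ℕ} (A : Matrix (Fin m) (Fin n) ℝ) (j : Fin n) :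
    ‖WithLp.toLp 2 (fun i => A i j)‖ ≤ l2OpNorm A := by
  have h := (LinearMap.toContinuousLinearMap (toEuclideanLin A)).le_opNorm
    (EuclideanSpace.single j 1)
  rwa [PiLp.norm_single, norm_one, mul_one, LinearMap.coe_toContinuousLinearMap',
    toEuclideanLin_single_one] at h

theorem abs_sqrt_sum_sq_col_sub_le {m n : ℕ} (W M : Matrix (Fin m) (Fin n) ℝ) (j : Fin n) :
    |√(∑ i, W i j ^ 2) - √(∑ i, M i j ^ 2)| ≤ l2OpNorm (W - M) := by
  rw [← norm_toLp_col, ← norm_toLp_col]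
  refine (abs_norm_sub_norm_le _ _).trans ?_
  rw [← WithLp.toLp_sub]
  exact norm_toLp_col_le_l2OpNorm (W - M) j

theorem sum_sqrt_le_sqrt_card_mul_sum {ι : Type*} [Fintype ι] {p : ι → ℝ} (hp : ∀ j, 0 ≤ p j) :
    ∑ j, √(p j) ≤ √(Fintype.card ι * ∑ j, p j) := by
  refine Real.le_sqrt_of_sq_le ?_
  simpa [Real.sq_sqrt (hp _)] using sq_sum_le_card_mul_sum_sq (s := Finset.univ) (f := fun j => √(p j))

theorem abs_sub_le_of_abs_sqrt_sub_le {x y ε : ℝ} (hx : 0 ≤ x) (hy : 0 ≤ y)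
    (h : |√y - √x| ≤ ε) : |y - x| ≤ (2 * √x + ε) * ε := by
  have hε : 0 ≤ ε := (abs_nonneg _).trans h
  have hfac : y - x = (√y - √x) * (√y + √x) := by
    linear_combination -(Real.sq_sqrt hy) + Real.sq_sqrt hx
  have hsum : √y + √x ≤ 2 * √x + ε := by linarith [(abs_le.mp h).2]
  rw [hfac, abs_mul, abs_of_nonneg (by positivity : 0 ≤ √y + √x), mul_comm]
  exact mul_le_mul hsum h (abs_nonneg _) (by positivity)

theorem sum_abs_sub_le_of_abs_sqrt_sub_le {ι : Type*} [Fintype ι] {p q : ι → ℝ} {ε : ℝ}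
    (hε : 0 ≤ ε) (hp : ∀ j, 0 ≤ p j) (hq : ∀ j, 0 ≤ q j) (h : ∀ j, |√(q j) - √(p j)| ≤ ε) :
    ∑ j, |q j - p j| ≤ (2 * √(Fintype.card ι * ∑ j, p j) + Fintype.card ι * ε) * ε :=
  calc ∑ j, |q j - p j| ≤ ∑ j, (2 * √(p j) + ε) * ε :=
        Finset.sum_le_sum fun j _ => abs_sub_le_of_abs_sqrt_sub_le (hp j) (hq j) (h j)
    _ = (2 * ∑ j, √(p j) + Fintype.card ι * ε) * ε := by
        simp only [← Finset.sum_mul, Finset.sum_add_distrib, Finset.mul_sum, Finset.sum_const,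
          Finset.card_univ, nsmul_eq_mul]
    _ ≤ (2 * √(Fintype.card ι * ∑ j, p j) + Fintype.card ι * ε) * ε := by
        gcongr
        exact sum_sqrt_le_sqrt_card_mul_sum hp

theorem sum_abs_div_sum_sub_div_sum_le {ι : Type*} [Fintype ι] {p q : ι → ℝ}
    (hq : ∀ j, 0 ≤ q j) (hP : 0 < ∑ j, p j) (hQ : 0 < ∑ j, q j) :
    ∑ j, |p j / ∑ i, p i - q j / ∑ i, q i| ≤ 2 * (∑ j, |q j - p j|) / ∑ j, p j := by
  set P := ∑ j, p j
  set Q := ∑ j, q j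
  have hsplit : ∀ j, p j / P - q j / Q = (p j - q j) / P + q j * (Q - P) / (P * Q) := by
    intro j; field_simp; ring
  have hQP : |Q - P| ≤ ∑ j, |q j - p j| := by
    rw [← Finset.sum_sub_distrib]
    exact Finset.abs_sum_le_sum_abs _ _
  calc ∑ j, |p j / P - q j / Q|
      ≤ ∑ j, (|q j - p j| / P + q j * |Q - P| / (P * Q)) := by
        refine Finset.sum_le_sum fun j _ => ?_
        rw [hsplit]
        refine (abs_add_le _ _).trans_eq ?_
        rw [abs_div, abs_div, abs_mul, abs_sub_comm (p j), abs_of_pos hP, abs_of_nonneg (hq j),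
          abs_of_pos (mul_pos hP hQ)]
    _ = (∑ j, |q j - p j|) / P + |Q - P| / P := by
        rw [Finset.sum_add_distrib, ← Finset.sum_div, ← Finset.sum_div, ← Finset.sum_mul,
          show ∑ j, q j = Q from rfl]
        field_simp
    _ ≤ 2 * (∑ j, |q j - p j|) / P := by
        rw [mul_div_assoc, two_mul]
        gcongr

theorem stmt_7_general (n d : ℕ) (εt : ℝ) (hεt : 0 ≤ εt)
    (M W : Matrix (Fin n) (Fin d) ℝ) (hMW : l2OpNorm (W - M) ≤ εt)
    (k B : ℝ) (hk : k = ∑ i, ∑ j, M i j ^ 2)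
    (hB : B = (2 * Real.sqrt (d * k) + d * εt) * εt) (hBk : B < k) :
    (∑ i, ∑ j, W i j ^ 2) ≥ k - B ∧ 0 < k - B ∧
      (∑ j, |(∑ i, M i j ^ 2) / k - (∑ i, W i j ^ 2) / (∑ i, ∑ j, W i j ^ 2)|) ≤
        2 * B / (k - B) := by
  have hk_cols : k = ∑ j, ∑ i, M i j ^ 2 := hk.trans Finset.sum_comm
  have hW_cols : ∑ i, ∑ j, W i j ^ 2 = ∑ j, ∑ i, W i j ^ 2 := Finset.sum_comm
  have hT : ∑ j, |∑ i, W i j ^ 2 - ∑ i, M i j ^ 2| ≤ B := by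
    simpa only [hB, hk_cols, Fintype.card_fin] using
      sum_abs_sub_le_of_abs_sqrt_sub_le hεt (fun j => by positivity) (fun j => by positivity)
        fun j => (abs_sqrt_sum_sq_col_sub_le W M j).trans hMW
  have hWk : |∑ i, ∑ j, W i j ^ 2 - k| ≤ B := by
    rw [hW_cols, hk_cols, ← Finset.sum_sub_distrib]
    exact (Finset.abs_sum_le_sum_abs _ _).trans hT
  have hW_ge : ∑ i, ∑ j, W i j ^ 2 ≥ k - B := by linarith [(abs_le.mp hWk).1]
  have hB0 : 0 ≤ B := (abs_nonneg _).trans hWk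
  have hk_pos : 0 < k := by linarith
  have hW_pos : 0 < ∑ i, ∑ j, W i j ^ 2 := by linarith
  refine ⟨hW_ge, by linarith, ?_⟩
  calc _ ≤ 2 * (∑ j, |∑ i, W i j ^ 2 - ∑ i, M i j ^ 2|) / k := by
        rw [hW_cols] at hW_pos ⊢
        rw [hk_cols] at hk_pos ⊢
        exact sum_abs_div_sum_sub_div_sum_le (fun j => by positivity) hk_pos hW_pos
    _ ≤ 2 * B / k := by gcongr
    _ ≤ 2 * B / (k - B) := by
        gcongr
        linarith

theorem stmt_7 (n d : ℕ) (hn : 0 < n) (hd : 0 < d) (εt : ℝ) (hεt : 0 ≤ εt)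
    (M W : Matrix (Fin n) (Fin d) ℝ) (hMW : l2OpNorm (W - M) ≤ εt)
    (k B : ℝ) (hk : k = ∑ i, ∑ j, M i j ^ 2)
    (hB : B = (2 * Real.sqrt (d * k) + d * εt) * εt) (hBk : B < k) :
    (∑ i, ∑ j, W i j ^ 2) ≥ k - B ∧ 0 < k - B ∧
      (∑ j, |(∑ i, M i j ^ 2) / k - (∑ i, W i j ^ 2) / (∑ i, ∑ j, W i j ^ 2)|) ≤
        2 * B / (k - B) :=
  stmt_7_general n d εt hεt M W hMW k B hk hB hBk
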